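/- For all complex numbers x, y, a and every natural number n, a_n(x+y,a) = \sum_{k=0}^n \binom{n}{k} a_k(x,a) a_{n-k}(y,a), i.e. the Abel polynomials form a sequence of binomial type. -/

import Mathlib

/-- Classical Abel polynomial `a_n(x,a)`, with `a_0 = 1`. -/
noncomputable def abelPoly (x a : ℂ) (n : ℕ) : ℂ :=
  if n = 0 then 1 else x * (x + n * a) ^ (n - 1)

/-!
Writing `D` for `d/dx` and `E^a` for the shift `x ↦ x + a`, the Abel polynomials satisfy
`a_0 = 1`, `a_{n+1}(0) = 0` and `D a_{n+1} = (n + 1) E^a a_n`. Any sequence with these three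
properties is of binomial type: for fixed `y`, both `x ↦ a_n(x + y)` and the binomial convolution
`x ↦ ∑ C(n,k) a_k(x) a_{n-k}(y)` have derivative `n` times the shift of their own `n - 1`
version, which agree by induction, and both take the value `a_n(y)` at `x = 0`.
-/

open Finset

section BinomialType

variable {𝕜 : Type*} [RCLike 𝕜]

theorem eq_of_hasDerivAt_eq {G : Type*} [NormedAddCommGroup G] [NormedSpace 𝕜 G]
    {f g f' : 𝕜 → G} (hf : ∀ x, HasDerivAt f (f' x) x) (hg : ∀ x, HasDerivAt g (f' x) x)
    (x₀ : 𝕜) (hfg : f x₀ = g x₀) : f = g :=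
  eq_of_fderiv_eq (fun x => (hf x).differentiableAt) (fun x => (hg x).differentiableAt)
    (fun x => by rw [(hf x).hasFDerivAt.fderiv, (hg x).hasFDerivAt.fderiv]) x₀ hfg

variable {p : ℕ → 𝕜 → 𝕜} {a : 𝕜}

theorem hasDerivAt_binomial_convolution (h0 : ∀ x, p 0 x = 1)
    (hp : ∀ n x, HasDerivAt (p (n + 1)) ((n + 1) * p n (x + a)) x)
    (q : ℕ → 𝕜) (n : ℕ) (x : 𝕜) :
    HasDerivAt (fun x => ∑ k ∈ range (n + 2), ((n + 1).choose k : 𝕜) * p k x * q (n + 1 - k))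
      ((n + 1) * ∑ k ∈ range (n + 1), (n.choose k : 𝕜) * p k (x + a) * q (n - k)) x := by
  simp_rw [sum_range_succ' _ (n + 1), h0, Nat.add_sub_add_right, mul_sum]
  refine (HasDerivAt.fun_sum fun k _ => ?_).add_const _
  refine (((hp k x).const_mul ((n + 1).choose (k + 1) : 𝕜)).mul_const (q (n - k))).congr_deriv ?_
  have hchoose : ((n + 1 : ℕ) : 𝕜) * n.choose k = (n + 1).choose (k + 1) * (k + 1 : ℕ) := by
    exact_mod_cast Nat.add_one_mul_choose_eq n k
  push_cast at hchoose
  linear_combination -p k (x + a) * q (n - k) * hchoose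

theorem binomial_type_of_hasDerivAt (h0 : ∀ x, p 0 x = 1) (hp0 : ∀ n, p (n + 1) 0 = 0)
    (hp : ∀ n x, HasDerivAt (p (n + 1)) ((n + 1) * p n (x + a)) x) (n : ℕ) (x y : 𝕜) :
    p n (x + y) = ∑ k ∈ range (n + 1), (n.choose k : 𝕜) * p k x * p (n - k) y := by
  induction n generalizing x with
  | zero => simp [h0]
  | succ n ih =>
    have hleft : ∀ x, HasDerivAt (fun x => p (n + 1) (x + y)) ((n + 1) * p n (x + a + y)) x :=
      fun x => by simpa [add_right_comm] using (hp n (x + y)).comp_add_const x y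
    have hright := hasDerivAt_binomial_convolution h0 hp (fun k => p k y) n
    simp_rw [← ih] at hright
    refine congrFun (eq_of_hasDerivAt_eq hleft hright 0 ?_) x
    simp [sum_range_succ', h0, hp0]

end BinomialType

theorem abelPoly_zero (x a : ℂ) : abelPoly x a 0 = 1 := if_pos rfl

theorem abelPoly_succ (x a : ℂ) (n : ℕ) :
    abelPoly x a (n + 1) = x * (x + (n + 1) * a) ^ n := by
  simp [abelPoly]

theorem hasDerivAt_abelPoly_succ (a : ℂ) (n : ℕ) (x : ℂ) :
    HasDerivAt (fun x => abelPoly x a (n + 1)) ((n + 1) * abelPoly (x + a) a n) x := by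
  simp_rw [abelPoly_succ]
  refine ((hasDerivAt_id' x).mul (((hasDerivAt_id' x).add_const _).fun_pow n)).congr_deriv ?_
  rcases n with _ | m
  · simp [abelPoly_zero]
  · rw [abelPoly_succ]
    push_cast
    ring

/-- The Abel polynomials are of binomial type. -/
theorem abel_binomial (x y a : ℂ) (n : ℕ) :
    abelPoly (x + y) a n =
      ∑ k ∈ Finset.range (n + 1),
        (n.choose k : ℂ) * abelPoly x a k * abelPoly y a (n - k) :=
  binomial_type_of_hasDerivAt (p := fun n x => abelPoly x a n) (abelPoly_zero · a)
    (by simp [abelPoly_succ]) (hasDerivAt_abelPoly_succ a) n x y
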